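/- arXiv:2004.11164 — 7 statements merged into one kernel-verified Lean document; each statement's English description precedes it below -/
import Mathlib

section
/- Let T be a tree on a finite vertex set V and let a,b,c,d be four pairwise distinct vertices with ab, cd ∈ E(T) and ac, bd ∉ E(T). Then the 2-switch of T at (a,b;c,d) is a tree if and only if either both edges ab and cd lie on the unique path in T from a to d, or both edges ab and cd lie on the unique path in T from b to c. -/
open SimpleGraph

/-- Four pairwise distinct vertices `a,b,c,d` with `ab, cd ∈ E(G)` and `ac, bd ∉ E(G)`:
the condition under which the 2-switch of `G` at `(a,b;c,d)` is performed. -/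
def Switchable {V : Type*} (G : SimpleGraph V) (a b c d : V) : Prop :=
  a ≠ b ∧ a ≠ c ∧ a ≠ d ∧ b ≠ c ∧ b ≠ d ∧ c ≠ d ∧
    G.Adj a b ∧ G.Adj c d ∧ ¬ G.Adj a c ∧ ¬ G.Adj b d

/-- The 2-switch of `G` at `(a,b;c,d)`: the graph on `V` with edge set
`(E(G) \ {ab, cd}) ∪ {ac, bd}`. -/
def twoSwitch {V : Type*} (G : SimpleGraph V) (a b c d : V) : SimpleGraph V :=
  SimpleGraph.fromEdgeSet ((G.edgeSet \ {s(a, b), s(c, d)}) ∪ {s(a, c), s(b, d)})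

/-- `G'` is obtained from `G` by a 2-switch. -/
def ObtainedByTwoSwitch {V : Type*} (G G' : SimpleGraph V) : Prop :=
  ∃ a b c d : V, Switchable G a b c d ∧ G' = twoSwitch G a b c d

/-!
Let `H` be the tree `T` with the edges `ab` and `cd` removed. Since both are bridges, `a, b` and
`c, d` are separated in `H`, while every vertex is still joined in `H` to one of `a, b, c, d`.
The 2-switch adds `ac` and `bd` back, so it has as many edges as `T` and is a tree iff it is
connected, which happens iff `b ~ c` or `a ~ d` in `H`. On the other hand, in a tree an edge lies on
the path from `u` to `v` iff deleting it separates `u` from `v`; this turns "`ab` and `cd` lie on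
the path from `a` to `d`" into `b ~ c` in `H`, and "on the path from `b` to `c`" into `a ~ d`.
-/

namespace SimpleGraph

variable {V : Type*} {G : SimpleGraph V}

theorem Reachable.mem_of_forall_adj {s : Set V} (hs : ∀ ⦃x y : V⦄, G.Adj x y → x ∈ s → y ∈ s)
    {u v : V} (h : G.Reachable u v) (hu : u ∈ s) : v ∈ s := by
  obtain ⟨p⟩ := h
  induction p with
  | nil => exact hu
  | cons hadj _ ih => exact ih (hs hadj hu)

theorem Reachable.reachable_deleteEdges_or {u v x y : V} (h : G.Reachable u v) :
    (G.deleteEdges {s(x, y)}).Reachable u v ∨ (G.deleteEdges {s(x, y)}).Reachable u x ∨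
      (G.deleteEdges {s(x, y)}).Reachable u y := by
  obtain ⟨p⟩ := h
  induction p with
  | nil => exact Or.inl .rfl
  | @cons u w v huw _ ih =>
    by_cases he : s(u, w) = s(x, y)
    · rcases Sym2.eq_iff.mp he with ⟨rfl, -⟩ | ⟨rfl, -⟩
      exacts [Or.inr (Or.inl .rfl), Or.inr (Or.inr .rfl)]
    · have huw' : (G.deleteEdges {s(x, y)}).Adj u w := by simp [huw, he]
      exact ih.imp huw'.reachable.trans (Or.imp huw'.reachable.trans huw'.reachable.trans)

theorem Preconnected.reachable_deleteEdges_pair (hG : G.Preconnected) (a b c d x : V) :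
    (G.deleteEdges {s(a, b), s(c, d)}).Reachable x a ∨
      (G.deleteEdges {s(a, b), s(c, d)}).Reachable x b ∨
      (G.deleteEdges {s(a, b), s(c, d)}).Reachable x c ∨
      (G.deleteEdges {s(a, b), s(c, d)}).Reachable x d := by
  rw [← Set.singleton_union, ← deleteEdges_deleteEdges]
  have hdel_cd : ∀ z, (G.deleteEdges {s(a, b)}).Reachable x z →
      ((G.deleteEdges {s(a, b)}).deleteEdges {s(c, d)}).Reachable x z ∨
      ((G.deleteEdges {s(a, b)}).deleteEdges {s(c, d)}).Reachable x c ∨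
      ((G.deleteEdges {s(a, b)}).deleteEdges {s(c, d)}).Reachable x d :=
    fun _ h ↦ h.reachable_deleteEdges_or
  rcases (hG x a).reachable_deleteEdges_or (x := a) (y := b) with h | h | h <;>
    rcases hdel_cd _ h with h' | h' | h' <;> tauto

theorem IsAcyclic.not_reachable_deleteEdges_of_adj (hG : G.IsAcyclic) {u v : V} (h : G.Adj u v) :
    ¬(G.deleteEdges {s(u, v)}).Reachable u v :=
  isBridge_iff.mp (isAcyclic_iff_forall_adj_isBridge.mp hG h)

theorem IsAcyclic.mem_edges_iff_not_reachable_deleteEdges (hG : G.IsAcyclic) {u v : V}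
    {p : G.Walk u v} (hp : p.IsPath) {e : Sym2 V} :
    e ∈ p.edges ↔ ¬(G.deleteEdges {e}).Reachable u v := by
  classical
  refine ⟨fun he ⟨q⟩ ↦ ?_, p.mem_edges_of_not_reachable_deleteEdges⟩
  have hq : (q.bypass.mapLe (deleteEdges_le _)).IsPath := q.bypass_isPath.mapLe _
  have hpq : p = q.bypass.mapLe (deleteEdges_le _) :=
    congrArg Subtype.val ((hG.subsingleton_path u v).elim ⟨p, hp⟩ ⟨_, hq⟩)
  rw [hpq, Walk.edges_mapLe_eq_edges] at he
  simpa using q.bypass.edges_subset_edgeSet he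

theorem IsTree.exists_isPath_mem_edges_iff (hG : G.IsTree) {u v : V} {e f : Sym2 V} :
    (∃ p : G.Walk u v, p.IsPath ∧ e ∈ p.edges ∧ f ∈ p.edges) ↔
      ¬(G.deleteEdges {e}).Reachable u v ∧ ¬(G.deleteEdges {f}).Reachable u v := by
  constructor
  · rintro ⟨p, hp, he, hf⟩
    exact ⟨(hG.isAcyclic.mem_edges_iff_not_reachable_deleteEdges hp).mp he,
      (hG.isAcyclic.mem_edges_iff_not_reachable_deleteEdges hp).mp hf⟩
  · rintro ⟨he, hf⟩
    obtain ⟨p, hp⟩ := hG.connected.exists_isPath u v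
    exact ⟨p, hp, p.mem_edges_of_not_reachable_deleteEdges he,
      p.mem_edges_of_not_reachable_deleteEdges hf⟩

theorem IsTree.exists_isPath_mem_edges_iff_reachable (hG : G.IsTree) {a b c d : V}
    (hab : G.Adj a b) (hcd : G.Adj c d) (hne : s(a, b) ≠ s(c, d)) :
    (∃ p : G.Walk a d, p.IsPath ∧ s(a, b) ∈ p.edges ∧ s(c, d) ∈ p.edges) ↔
      (G.deleteEdges {s(a, b), s(c, d)}).Reachable b c := by
  have hle_ab : G.deleteEdges {s(a, b), s(c, d)} ≤ G.deleteEdges {s(a, b)} :=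
    deleteEdges_anti (by simp)
  have hle_cd : G.deleteEdges {s(a, b), s(c, d)} ≤ G.deleteEdges {s(c, d)} :=
    deleteEdges_anti (by simp)
  have hab' : (G.deleteEdges {s(c, d)}).Adj a b := by simp [hab, hne]
  have hcd' : (G.deleteEdges {s(a, b)}).Adj c d := by simp [hcd, hne.symm]
  have hsep_ab := hG.isAcyclic.not_reachable_deleteEdges_of_adj hab
  have hsep_cd := hG.isAcyclic.not_reachable_deleteEdges_of_adj hcd
  rw [hG.exists_isPath_mem_edges_iff]
  constructor
  · rintro ⟨had_ab, had_cd⟩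
    have hbd : (G.deleteEdges {s(a, b)}).Reachable b d := by
      rcases (hG.connected.preconnected d a).reachable_deleteEdges_or (x := a) (y := b)
        with h | h | h
      exacts [absurd h.symm had_ab, absurd h.symm had_ab, h.symm]
    rw [← Set.singleton_union, ← deleteEdges_deleteEdges] at hle_cd ⊢
    rcases hbd.reachable_deleteEdges_or (x := c) (y := d) with h | h | h
    · exact absurd (hab'.reachable.trans (h.mono hle_cd)) had_cd
    · exact h
    · exact absurd (hab'.reachable.trans (h.mono hle_cd)) had_cd
  · intro hbc
    exact ⟨fun h ↦ hsep_ab (h.trans (hcd'.symm.reachable.trans (hbc.mono hle_ab).symm)),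
      fun h ↦ hsep_cd ((hbc.mono hle_cd).symm.trans (hab'.symm.reachable.trans h))⟩

end SimpleGraph

open SimpleGraph

section TwoSwitch

variable {V : Type*} {G : SimpleGraph V} {a b c d : V}

theorem twoSwitch_adj (hac : a ≠ c) (hbd : b ≠ d) {u v : V} :
    (twoSwitch G a b c d).Adj u v ↔
      (G.deleteEdges {s(a, b), s(c, d)}).Adj u v ∨ s(u, v) = s(a, c) ∨ s(u, v) = s(b, d) := by
  simp only [twoSwitch, fromEdgeSet_adj, deleteEdges_adj, Set.mem_union, Set.mem_sdiff,
    mem_edgeSet, Set.mem_insert_iff, Set.mem_singleton_iff]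
  constructor
  · rintro ⟨h | h | h, -⟩
    exacts [Or.inl h, Or.inr (Or.inl h), Or.inr (Or.inr h)]
  · have hne {x y : V} (hxy : x ≠ y) (h : s(u, v) = s(x, y)) : u ≠ v :=
      fun huv ↦ hxy (Sym2.mk_isDiag_iff.mp (h ▸ Sym2.mk_isDiag_iff.mpr huv))
    rintro (h | h | h)
    exacts [⟨Or.inl h, h.1.ne⟩, ⟨Or.inr (Or.inl h), hne hac h⟩, ⟨Or.inr (Or.inr h), hne hbd h⟩]

theorem Switchable.card_edgeSet_twoSwitch [Finite V] (h : Switchable G a b c d) :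
    Nat.card (twoSwitch G a b c d).edgeSet = Nat.card G.edgeSet := by
  obtain ⟨hab, hac, had, hbc, hbd, -, hAB, hCD, hnAC, hnBD⟩ := h
  have hE : (twoSwitch G a b c d).edgeSet =
      (G.edgeSet \ {s(a, b), s(c, d)}) ∪ {s(a, c), s(b, d)} := by
    ext ⟨u, v⟩
    simp only [mem_edgeSet, twoSwitch_adj hac hbd, deleteEdges_adj, Set.mem_union, Set.mem_sdiff,
      Set.mem_insert_iff, Set.mem_singleton_iff]
  have hsub : {s(a, b), s(c, d)} ⊆ G.edgeSet := by simp [Set.insert_subset_iff, hAB, hCD]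
  have hdisj : Disjoint (G.edgeSet \ {s(a, b), s(c, d)}) {s(a, c), s(b, d)} := by
    simp [Set.disjoint_right, hnAC, hnBD]
  rw [Nat.card_coe_set_eq, Nat.card_coe_set_eq, hE, Set.ncard_union_eq hdisj,
    ← Set.ncard_sdiff_add_ncard_of_subset hsub, Set.ncard_pair, Set.ncard_pair] <;> simp [*]

theorem SimpleGraph.IsTree.connected_twoSwitch_iff (hG : G.IsTree) (h : Switchable G a b c d) :
    (twoSwitch G a b c d).Connected ↔
      (G.deleteEdges {s(a, b), s(c, d)}).Reachable b c ∨
        (G.deleteEdges {s(a, b), s(c, d)}).Reachable a d := by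
  obtain ⟨-, hac, -, -, hbd, -, hab, hcd, -, -⟩ := h
  set H := G.deleteEdges {s(a, b), s(c, d)}
  have hsep_ab : ¬H.Reachable a b := fun hr ↦
    hG.isAcyclic.not_reachable_deleteEdges_of_adj hab (hr.mono (deleteEdges_anti (by simp)))
  have hsep_cd : ¬H.Reachable c d := fun hr ↦
    hG.isAcyclic.not_reachable_deleteEdges_of_adj hcd (hr.mono (deleteEdges_anti (by simp)))
  constructor
  · intro hconn
    by_contra! hsep
    obtain ⟨hbc, had⟩ := hsep
    -- `s(a, c)` stays inside this union of two `H`-components and `s(b, d)` lies outside it.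
    have hclosed : ∀ ⦃x y : V⦄, (twoSwitch G a b c d).Adj x y →
        x ∈ {z | H.Reachable a z ∨ H.Reachable c z} →
        y ∈ {z | H.Reachable a z ∨ H.Reachable c z} := by
      intro x y hxy hx
      rcases (twoSwitch_adj hac hbd).mp hxy with hH | he | he
      · exact hx.imp (·.trans hH.reachable) (·.trans hH.reachable)
      · rcases Sym2.eq_iff.mp he with ⟨-, rfl⟩ | ⟨-, rfl⟩
        exacts [Or.inr .rfl, Or.inl .rfl]
      · exfalso
        rcases Sym2.eq_iff.mp he with ⟨rfl, -⟩ | ⟨rfl, -⟩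
        exacts [hx.elim hsep_ab (hbc ·.symm), hx.elim had hsep_cd]
    exact ((hconn.preconnected a b).mem_of_forall_adj hclosed (Or.inl .rfl)).elim
      hsep_ab (hbc ·.symm)
  · intro hbc_or_had
    have hle : H ≤ twoSwitch G a b c d := fun _ _ huv ↦ (twoSwitch_adj hac hbd).mpr (Or.inl huv)
    have hac' : (twoSwitch G a b c d).Reachable a c :=
      ((twoSwitch_adj hac hbd).mpr (Or.inr (Or.inl rfl))).reachable
    have hbd' : (twoSwitch G a b c d).Reachable b d :=
      ((twoSwitch_adj hac hbd).mpr (Or.inr (Or.inr rfl))).reachable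
    have hreach : (twoSwitch G a b c d).Reachable a b ∧ (twoSwitch G a b c d).Reachable a d := by
      rcases hbc_or_had with hbc | had
      · exact ⟨hac'.trans (hbc.mono hle).symm, hac'.trans ((hbc.mono hle).symm.trans hbd')⟩
      · exact ⟨(had.mono hle).trans hbd'.symm, had.mono hle⟩
    refine (connected_iff_exists_forall_reachable _).mpr ⟨a, fun x ↦ ?_⟩
    rcases hG.connected.preconnected.reachable_deleteEdges_pair a b c d x with h | h | h | h
    exacts [(h.mono hle).symm, hreach.1.trans (h.mono hle).symm, hac'.trans (h.mono hle).symm,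
      hreach.2.trans (h.mono hle).symm]

end TwoSwitch

/-- a 2-switch of a tree is a tree iff both switched edges lie on the
unique path from `a` to `d`, or both lie on the unique path from `b` to `c`. -/
theorem stmt_1 {V : Type*} [Fintype V] (T : SimpleGraph V) (hT : T.IsTree)
    (a b c d : V) (h : Switchable T a b c d) :
    (twoSwitch T a b c d).IsTree ↔
      (∃ p : T.Walk a d, p.IsPath ∧ s(a, b) ∈ p.edges ∧ s(c, d) ∈ p.edges) ∨
      (∃ p : T.Walk b c, p.IsPath ∧ s(a, b) ∈ p.edges ∧ s(c, d) ∈ p.edges) := by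
  obtain ⟨-, hac, had, -, -, -, hab, hcd, -, -⟩ := id h
  have hne : s(a, b) ≠ s(c, d) := by simp [hac, had]
  have hne' : s(b, a) ≠ s(d, c) := by simp [hac, had]
  have hpath_bc := hT.exists_isPath_mem_edges_iff_reachable hab.symm hcd.symm hne'
  rw [Sym2.eq_swap (a := b), Sym2.eq_swap (a := d)] at hpath_bc
  rw [isTree_iff_connected_and_card, h.card_edgeSet_twoSwitch,
    and_iff_left (isTree_iff_connected_and_card.mp hT).2, hT.connected_twoSwitch_iff h,
    hT.exists_isPath_mem_edges_iff_reachable hab hcd hne, hpath_bc]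
end

section
/- Let F be a forest on a finite vertex set V and let a,b,c,d be four pairwise distinct vertices with ab, cd ∈ E(F) and ac, bd ∉ E(F). If the edges ab and cd lie in different connected components of F, then the 2-switch of F at (a,b;c,d) is a forest. -/
open SimpleGraph

/-!
Deleting `ab` and `cd` from the forest `F` leaves a forest `H` in which `b` is separated from `a`
(since `ab` is a bridge of `F`) and from `c` (since `a` and `c` are already separated in `F`).
Adding `ac` joins two components of `H`, and `b` stays separated from `d` in `H + ac`: a path
from `b` to `d` would avoid `a` and `c`, hence lie in `H`, and together with `ab` and `cd`
connect `a` to `c` in `F`. So neither added edge closes a cycle.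
-/

namespace SimpleGraph

variable {V : Type*}

theorem twoSwitch_eq (G : SimpleGraph V) (a b c d : V) :
    twoSwitch G a b c d = G.deleteEdges {s(a, b), s(c, d)} ⊔ edge a c ⊔ edge b d := by
  ext u w
  have hne : G.Adj u w → u ≠ w := Adj.ne
  simp only [twoSwitch, edge, deleteEdges, fromEdgeSet_adj, sup_adj, sdiff_adj, Set.mem_union,
    Set.mem_sdiff, Set.mem_insert_iff, Set.mem_singleton_iff, mem_edgeSet]
  tauto

theorem Reachable.of_sup_edge {G : SimpleGraph V} {x y u v : V}
    (huv : (G ⊔ edge x y).Reachable u v) (hux : ¬G.Reachable u x) (huy : ¬G.Reachable u y) : G.Reachable u v := by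
  obtain ⟨p⟩ := huv
  induction p with
  | nil => rfl
  | @cons u w v hadj p ih =>
    rcases hadj with hG | hxy
    · exact hG.reachable.trans <| ih (fun h ↦ hux (hG.reachable.trans h))
        (fun h ↦ huy (hG.reachable.trans h))
    · rw [edge_adj] at hxy
      rcases hxy.1 with ⟨rfl, -⟩ | ⟨rfl, -⟩
      exacts [absurd .rfl hux, absurd .rfl huy]

end SimpleGraph

theorem stmt_2_general {V : Type*} (F : SimpleGraph V) (hF : F.IsAcyclic)
    (a b c d : V) (h : Switchable F a b c d) (hcomp : ¬ F.Reachable a c) :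
    (twoSwitch F a b c d).IsAcyclic := by
  obtain ⟨-, -, -, -, -, -, hab, hcd, -, -⟩ := h
  set H := F.deleteEdges {s(a, b), s(c, d)}
  have hHF : H ≤ F := deleteEdges_le _
  have hba : ¬H.Reachable b a := fun hr ↦
    isAcyclic_iff_forall_adj_isBridge.1 hF hab <|
      hr.symm.mono <| deleteEdges_anti <| Set.singleton_subset_iff.2 <| Set.mem_insert _ _
  have hbc : ¬H.Reachable b c := fun hr ↦ hcomp <| hab.reachable.trans <| hr.mono hHF
  have hbd : ¬(H ⊔ edge a c).Reachable b d := fun hr ↦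
    hcomp <| hab.reachable.trans <| ((hr.of_sup_edge hba hbc).mono hHF).trans hcd.reachable.symm
  rw [twoSwitch_eq]
  exact ((hF.anti hHF).sup_edge_of_not_reachable fun hr ↦ hcomp (hr.mono hHF))
    |>.sup_edge_of_not_reachable hbd

/-- a 2-switch between edges lying in different connected components of a
forest yields a forest. -/
theorem stmt_2 {V : Type*} [Fintype V] (F : SimpleGraph V) (hF : F.IsAcyclic)
    (a b c d : V) (h : Switchable F a b c d) (hcomp : ¬ F.Reachable a c) :
    (twoSwitch F a b c d).IsAcyclic :=
  stmt_2_general F hF a b c d h hcomp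
end

section
/- Let G be a simple graph on a finite vertex set V, let M be a maximum matching in G, and let a,b,c,d be four pairwise distinct vertices with ab, cd ∈ E(G) and ac, bd ∉ E(G). If either both edges ab and cd belong to M, or neither of them belongs to M, then μ(G) ≤ μ(G'), where G' is the 2-switch of G at (a,b;c,d). -/
open SimpleGraph

/-- `M` is a matching in `G`: a set of pairwise disjoint edges of `G`. -/
def IsMatchingSet {V : Type*} (G : SimpleGraph V) (M : Set (Sym2 V)) : Prop :=
  M ⊆ G.edgeSet ∧ ∀ e ∈ M, ∀ f ∈ M, e ≠ f → ∀ v : V, v ∈ e → v ∉ f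

/-- The matching number `μ(G)`: the maximum cardinality of a matching in `G`. -/
noncomputable def matchNum {V : Type*} (G : SimpleGraph V) : ℕ :=
  sSup {n : ℕ | ∃ M : Set (Sym2 V), IsMatchingSet G M ∧ M.ncard = n}

lemma ncard_le_matchNum {V : Type*} [Fintype V] (G : SimpleGraph V) {M : Set (Sym2 V)}
    (hM : IsMatchingSet G M) : M.ncard ≤ matchNum G := by
  apply le_csSup
  · refine ⟨Nat.card (Sym2 V), ?_⟩
    rintro n ⟨N, -, rfl⟩
    calc N.ncard ≤ (Set.univ : Set (Sym2 V)).ncard :=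
          Set.ncard_le_ncard (Set.subset_univ N) Set.finite_univ
      _ = Nat.card (Sym2 V) := Set.ncard_univ _
  · exact ⟨M, hM, rfl⟩

/-- if a maximum matching `M` contains both or neither of the switched
edges, then the 2-switch does not decrease the matching number. -/
theorem stmt_11 {V : Type*} [Fintype V] (G : SimpleGraph V) (M : Set (Sym2 V))
    (hM : IsMatchingSet G M) (hmax : M.ncard = matchNum G)
    (a b c d : V) (h : Switchable G a b c d)
    (hcase : (s(a, b) ∈ M ∧ s(c, d) ∈ M) ∨ (s(a, b) ∉ M ∧ s(c, d) ∉ M)) :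
    matchNum G ≤ matchNum (twoSwitch G a b c d) := by
  obtain ⟨hab, hac, had, hbc, hbd, hcd, gab, gcd, nac, nbd⟩ := h
  have hES : ∀ e, e ∈ (G.edgeSet \ {s(a,b), s(c,d)}) ∪ {s(a,c), s(b,d)} → ¬ e.IsDiag →
      e ∈ (twoSwitch G a b c d).edgeSet := by
    intro e he hd
    rw [twoSwitch, edgeSet_fromEdgeSet]
    exact ⟨he, hd⟩
  rw [← hmax]
  rcases hcase with ⟨habM, hcdM⟩ | ⟨habM, hcdM⟩
  · -- both edges in M: switch them
    set S : Set (Sym2 V) := M \ {s(a,b), s(c,d)} with hS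
    set M' : Set (Sym2 V) := insert s(a,c) (insert s(b,d) S) with hM'
    have hacM : s(a,c) ∉ M := fun hmem => nac (G.mem_edgeSet.1 (hM.1 hmem))
    have hbdM : s(b,d) ∉ M := fun hmem => nbd (G.mem_edgeSet.1 (hM.1 hmem))
    have habcd : s(a,b) ≠ s(c,d) := by
      intro h'; rw [Sym2.eq_iff] at h'; tauto
    have hacbd : s(a,c) ≠ s(b,d) := by
      intro h'; rw [Sym2.eq_iff] at h'; tauto
    have hdisjS : ∀ e ∈ S, ∀ v ∈ ({a, b, c, d} : Set V), v ∉ e := by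
      rintro e ⟨heM, hepair⟩ v hv
      have hne1 : s(a,b) ≠ e := fun h' => hepair (by simp [← h'])
      have hne2 : s(c,d) ≠ e := fun h' => hepair (by simp [← h'])
      simp only [Set.mem_insert_iff, Set.mem_singleton_iff] at hv
      rcases hv with rfl | rfl | rfl | rfl
      · exact hM.2 _ habM _ heM hne1 _ (by simp)
      · exact hM.2 _ habM _ heM hne1 _ (by simp)
      · exact hM.2 _ hcdM _ heM hne2 _ (by simp)
      · exact hM.2 _ hcdM _ heM hne2 _ (by simp)
    have hmatch : IsMatchingSet (twoSwitch G a b c d) M' := by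
      constructor
      · intro e he
        simp only [hM', Set.mem_insert_iff] at he
        rcases he with rfl | rfl | he
        · exact hES _ (Or.inr (by simp)) (by simp [hac])
        · exact hES _ (Or.inr (by simp)) (by simp [hbd])
        · exact hES _ (Or.inl ⟨hM.1 he.1, he.2⟩)
            (G.not_isDiag_of_mem_edgeSet (hM.1 he.1))
      · rintro e he f hf hne v hv
        simp only [hM', Set.mem_insert_iff] at he hf
        rcases he with rfl | rfl | he <;> rcases hf with rfl | rfl | hf
        · exact absurd rfl hne
        · simp only [Sym2.mem_iff] at hv ⊢
          push_neg
          rcases hv with rfl | rfl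
          · exact ⟨hab, had⟩
          · exact ⟨hbc.symm, hcd⟩
        · exact fun hvf => hdisjS f hf v
            (by simp only [Sym2.mem_iff] at hv; rcases hv with rfl | rfl <;> simp) hvf
        · simp only [Sym2.mem_iff] at hv ⊢
          push_neg
          rcases hv with rfl | rfl
          · exact ⟨hab.symm, hbc⟩
          · exact ⟨had.symm, hcd.symm⟩
        · exact absurd rfl hne
        · exact fun hvf => hdisjS f hf v
            (by simp only [Sym2.mem_iff] at hv; rcases hv with rfl | rfl <;> simp) hvf
        · intro hvf
          simp only [Sym2.mem_iff] at hvf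
          exact hdisjS e he v (by rcases hvf with rfl | rfl <;> simp) hv
        · intro hvf
          simp only [Sym2.mem_iff] at hvf
          exact hdisjS e he v (by rcases hvf with rfl | rfl <;> simp) hv
        · exact hM.2 e he.1 f hf.1 hne v hv
    have hcdS : s(c,d) ∉ S := fun h' => h'.2 (by simp)
    have habS : s(a,b) ∉ insert s(c,d) S := by
      rintro (h' | h')
      · exact habcd h'
      · exact h'.2 (by simp)
    have hbdS : s(b,d) ∉ S := fun h' => hbdM h'.1
    have hacS : s(a,c) ∉ insert s(b,d) S := by
      rintro (h' | h')
      · exact hacbd h'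
      · exact hacM h'.1
    have hMeq : M = insert s(a,b) (insert s(c,d) S) := by
      ext e
      simp only [hS, Set.mem_insert_iff, Set.mem_diff, Set.mem_singleton_iff]
      constructor
      · intro he
        by_cases h1 : e = s(a,b)
        · exact Or.inl h1
        · by_cases h2 : e = s(c,d)
          · exact Or.inr (Or.inl h2)
          · exact Or.inr (Or.inr ⟨he, by push_neg; exact ⟨h1, h2⟩⟩)
      · rintro (rfl | rfl | ⟨he, -⟩) <;> assumption
    have hcardM : M.ncard = S.ncard + 2 := by
      rw [hMeq, Set.ncard_insert_of_notMem habS, Set.ncard_insert_of_notMem hcdS]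
    have hcardM' : M'.ncard = S.ncard + 2 := by
      rw [hM', Set.ncard_insert_of_notMem hacS, Set.ncard_insert_of_notMem hbdS]
    calc M.ncard = M'.ncard := by rw [hcardM, hcardM']
      _ ≤ matchNum (twoSwitch G a b c d) := ncard_le_matchNum _ hmatch
  · -- neither edge in M: M itself works
    refine ncard_le_matchNum _ ⟨?_, hM.2⟩
    intro e he
    refine hES _ (Or.inl ⟨hM.1 he, ?_⟩) (G.not_isDiag_of_mem_edgeSet (hM.1 he))
    rintro (rfl | rfl)
    · exact habM he
    · exact hcdM he
end

section
/- Let F be a forest on a finite vertex set V and let F' be a graph obtained from F by a 2-switch such that F' is also a forest. Then the difference of the ranks over ℝ of the adjacency matrices of F' and F is 0, 2, or −2; equivalently, |rank(F') − rank(F)| ∈ {0, 2}, where rank denotes the rank of the adjacency matrix over the real numbers. -/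
open SimpleGraph

/-- The rank of a graph: the rank of its adjacency matrix over `ℝ`. -/
noncomputable def graphRank {V : Type*} [Fintype V] [DecidableEq V]
    (G : SimpleGraph V) : ℕ :=
  haveI := Classical.decRel G.Adj
  (G.adjMatrix ℝ).rank

/-!
The adjacency matrix of the 2-switch at `(a,b;c,d)` is `A + p qᵀ + q pᵀ` with `p = e_a - e_d` and
`q = e_c - e_b`, so the two ranks differ by at most `2`. A forest is bipartite, and a symmetric
matrix supported on the edges of a bipartition has the block form `[[0, B], [Bᵀ, 0]]`, whose rank
`2 · rank B` is even. Hence the difference of the ranks is an even number in `[-2, 2]`.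
-/

open Matrix

theorem Submodule.finrank_prod {K M N : Type*} [Field K] [AddCommGroup M] [Module K M]
    [AddCommGroup N] [Module K N] (p : Submodule K M) (q : Submodule K N)
    [FiniteDimensional K p] [FiniteDimensional K q] :
    Module.finrank K (p.prod q) = Module.finrank K p + Module.finrank K q := by
  have hinj : Function.Injective (p.subtype.prodMap q.subtype) :=
    p.injective_subtype.prodMap q.injective_subtype
  rw [← Module.finrank_prod, ← LinearMap.finrank_range_of_inj hinj, LinearMap.range_prodMap,
    Submodule.range_subtype, Submodule.range_subtype]

namespace Matrix

variable {m n K : Type*} [Field K]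

theorem rank_add_le [Fintype n] (A B : Matrix m n K) : (A + B).rank ≤ A.rank + B.rank := by
  rw [rank, mulVecLin_add]
  exact (Submodule.finrank_mono (LinearMap.range_add_le _ _)).trans
    (Submodule.finrank_add_le_finrank_add_finrank _ _)

theorem rank_le_rank_add_add_rank [Fintype n] (A B : Matrix m n K) :
    A.rank ≤ (A + B).rank + B.rank := by
  have hneg : (-B).rank = B.rank := by
    simpa using rank_smul_of_mem_nonZeroDivisors B (c := (-1 : K)) (by simp)
  simpa [hneg] using rank_add_le (A + B) (-B)

theorem rank_vecMulVec_add_vecMulVec_le [Fintype n] (w v : n → K) :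
    (vecMulVec w v + vecMulVec v w).rank ≤ 2 :=
  (rank_add_le _ _).trans (add_le_add (rank_vecMulVec_le w v) (rank_vecMulVec_le v w))

theorem rank_fromBlocks_zero_zero [Fintype m] [Fintype n] (B : Matrix m n K)
    (C : Matrix n m K) : (fromBlocks 0 B C 0).rank = B.rank + C.rank := by
  let e := LinearEquiv.sumArrowLequivProdArrow m n K K
  have hrange : (LinearMap.range (fromBlocks 0 B C 0).mulVecLin).map (e : _ →ₗ[K] _) =
      (LinearMap.range B.mulVecLin).prod (LinearMap.range C.mulVecLin) := by
    apply le_antisymm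
    · rintro x ⟨y, ⟨z, rfl⟩, rfl⟩
      refine ⟨⟨z ∘ Sum.inr, ?_⟩, ⟨z ∘ Sum.inl, ?_⟩⟩ <;> ext i <;>
        simp [e, fromBlocks_mulVec, LinearEquiv.sumArrowLequivProdArrow]
    · rintro ⟨x, y⟩ ⟨⟨zx, hx⟩, ⟨zy, hy⟩⟩
      refine ⟨Sum.elim x y, ⟨Sum.elim zy zx, ?_⟩, rfl⟩
      simp only [mulVecLin_apply] at hx hy ⊢
      ext (i | i) <;> simp [fromBlocks_mulVec, hx, hy]
  rw [rank, ← LinearEquiv.finrank_map_eq e, hrange, Submodule.finrank_prod]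
  rfl

theorem IsSymm.even_rank_of_bipartite {V : Type*} [Fintype V] {A : Matrix V V K} (hA : A.IsSymm)
    (P : V → Prop) [DecidablePred P] (hP : ∀ i j, A i j ≠ 0 → (P i ↔ ¬P j)) :
    Even A.rank := by
  let e := Equiv.sumCompl P
  have h₁₁ : (A.submatrix e e).toBlocks₁₁ = 0 := by
    ext i j
    by_contra h
    exact (hP i j h).1 i.2 j.2
  have h₂₂ : (A.submatrix e e).toBlocks₂₂ = 0 := by
    ext i j
    by_contra h
    exact i.2 ((hP i j h).2 j.2)
  have h₂₁ : (A.submatrix e e).toBlocks₂₁ = (A.submatrix e e).toBlocks₁₂ᵀ := by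
    ext i j
    simpa [e, toBlocks₂₁, toBlocks₁₂] using hA.apply j i
  rw [← rank_submatrix A e e, ← fromBlocks_toBlocks (A.submatrix e e), h₁₁, h₂₂, h₂₁,
    rank_fromBlocks_zero_zero, rank_transpose]
  exact Even.add_self _

end Matrix

namespace SimpleGraph

variable {V : Type*}

theorem Colorable.even_rank_adjMatrix {K : Type*} [Fintype V] [Field K] {G : SimpleGraph V}
    [DecidableRel G.Adj] (hG : G.Colorable 2) : Even (G.adjMatrix K).rank := by
  obtain ⟨c⟩ := hG
  refine (isSymm_adjMatrix G).even_rank_of_bipartite (fun v => c v = 0) fun i j hij => ?_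
  have hadj : G.Adj i j := by
    by_contra h
    simp [h] at hij
  have := c.valid hadj
  omega

theorem twoSwitch_adj {G : SimpleGraph V} {a b c d : V} (hac : a ≠ c) (hbd : b ≠ d) {i j : V} :
    (twoSwitch G a b c d).Adj i j ↔
      G.Adj i j ∧ s(i, j) ≠ s(a, b) ∧ s(i, j) ≠ s(c, d) ∨ s(i, j) = s(a, c) ∨ s(i, j) = s(b, d) := by
  rw [twoSwitch, fromEdgeSet_adj]
  simp only [Set.mem_union, Set.mem_sdiff, Set.mem_insert_iff, Set.mem_singleton_iff, mem_edgeSet]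
  constructor
  · tauto
  · rintro (h | h | h)
    · exact ⟨Or.inl ⟨h.1, by tauto⟩, h.1.ne⟩
    · refine ⟨Or.inr (Or.inl h), ?_⟩
      rintro rfl
      rw [Sym2.eq_iff] at h
      grind
    · refine ⟨Or.inr (Or.inr h), ?_⟩
      rintro rfl
      rw [Sym2.eq_iff] at h
      grind

theorem twoSwitch_adjMatrix {R : Type*} [Ring R] [DecidableEq V] {G : SimpleGraph V}
    [DecidableRel G.Adj] {a b c d : V} (hS : Switchable G a b c d)
    [DecidableRel (twoSwitch G a b c d).Adj] :
    (twoSwitch G a b c d).adjMatrix R = G.adjMatrix R +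
      (vecMulVec (Pi.single a 1 - Pi.single d 1) (Pi.single c 1 - Pi.single b 1) +
        vecMulVec (Pi.single c 1 - Pi.single b 1) (Pi.single a 1 - Pi.single d 1)) := by
  obtain ⟨hab, hac, had, hbc, hbd, hcd, hGab, hGcd, hGac, hGbd⟩ := hS
  ext i j
  simp only [adjMatrix_apply, Matrix.add_apply, vecMulVec_apply, twoSwitch_adj hac hbd,
    Sym2.eq_iff, Pi.sub_apply, Pi.single_apply]
  by_cases hia : i = a <;> by_cases hib : i = b <;> by_cases hic : i = c <;>
    by_cases hid : i = d <;> by_cases hja : j = a <;> by_cases hjb : j = b <;>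
    by_cases hjc : j = c <;> by_cases hjd : j = d <;> subst_vars <;> simp_all [G.adj_comm]

section graphRank

variable [Fintype V] [DecidableEq V]

theorem graphRank_eq (G : SimpleGraph V) [DecidableRel G.Adj] :
    graphRank G = (G.adjMatrix ℝ).rank := by
  unfold graphRank
  congr

theorem IsAcyclic.even_graphRank {G : SimpleGraph V} (hG : G.IsAcyclic) : Even (graphRank G) := by
  classical
  rw [graphRank_eq]
  exact hG.colorable_two.even_rank_adjMatrix

theorem graphRank_twoSwitch_le {G : SimpleGraph V} {a b c d : V} (hS : Switchable G a b c d) :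
    graphRank (twoSwitch G a b c d) ≤ graphRank G + 2 := by
  classical
  rw [graphRank_eq, graphRank_eq, twoSwitch_adjMatrix hS]
  exact (rank_add_le _ _).trans (add_le_add_right (rank_vecMulVec_add_vecMulVec_le _ _) _)

theorem graphRank_le_graphRank_twoSwitch_add_two {G : SimpleGraph V} {a b c d : V}
    (hS : Switchable G a b c d) : graphRank G ≤ graphRank (twoSwitch G a b c d) + 2 := by
  classical
  rw [graphRank_eq, graphRank_eq, twoSwitch_adjMatrix hS]
  exact (rank_le_rank_add_add_rank _ _).trans
    (add_le_add_right (rank_vecMulVec_add_vecMulVec_le _ _) _)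

end graphRank

end SimpleGraph

/-- an f-switch changes the rank of a forest by `0`, `2`, or `-2`. -/
theorem stmt_13 {V : Type*} [Fintype V] [DecidableEq V] (F F' : SimpleGraph V)
    (hF : F.IsAcyclic) (hF' : F'.IsAcyclic) (h : ObtainedByTwoSwitch F F') :
    (graphRank F' : ℤ) - (graphRank F : ℤ) = 0 ∨
    (graphRank F' : ℤ) - (graphRank F : ℤ) = 2 ∨
    (graphRank F' : ℤ) - (graphRank F : ℤ) = -2 := by
  obtain ⟨a, b, c, d, hS, rfl⟩ := h
  have hup := graphRank_twoSwitch_le hS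
  have hdown := graphRank_le_graphRank_twoSwitch_add_two hS
  obtain ⟨k, hk⟩ := hF.even_graphRank
  obtain ⟨k', hk'⟩ := hF'.even_graphRank
  omega
end

section
/- The independence number is stable under 2-switch: for every simple graph G on a finite vertex set V and every graph G' obtained from G by a 2-switch, |α(G') − α(G)| ≤ 1. -/
open SimpleGraph

/-- The independence number `α(G)`: the maximum cardinality of a set of vertices no two
of which are adjacent. -/
noncomputable def indepNum' {V : Type*} (G : SimpleGraph V) : ℕ :=
  sSup {n : ℕ | ∃ S : Set V, (∀ v ∈ S, ∀ w ∈ S, ¬ G.Adj v w) ∧ S.ncard = n}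

/-!
Each of `G` and its 2-switch `G'` at `(a,b;c,d)` is obtained from the other by deleting two
edges and adding two: `G'` adds `ac, bd` to `G`, whose edge `ab` joins an endpoint of each, and
`G` adds `ab, cd` to `G'`, whose edge `ac` joins an endpoint of each. Adding two edges linked in
this way lowers the independence number by at most one.
-/

namespace SimpleGraph

variable {V : Type*}

theorem indep_of_edgeSet_subset_union_pair {P Q : SimpleGraph V} {p₁ p₂ q₁ q₂ : V}
    (hPQ : P.edgeSet ⊆ Q.edgeSet ∪ {s(p₁, p₂), s(q₁, q₂)}) {S : Set V}
    (hS : ∀ v ∈ S, ∀ w ∈ S, ¬ Q.Adj v w) (hp : p₁ ∉ S ∨ p₂ ∉ S) (hq : q₁ ∉ S ∨ q₂ ∉ S) :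
    ∀ v ∈ S, ∀ w ∈ S, ¬ P.Adj v w := by
  intro v hv w hw hvw
  rcases hPQ (P.mem_edgeSet.mpr hvw) with hQ | hp' | hq'
  · exact hS v hv w hw hQ
  · rcases Sym2.eq_iff.mp hp' with ⟨rfl, rfl⟩ | ⟨rfl, rfl⟩ <;> tauto
  · rcases Sym2.eq_iff.mp (Set.mem_singleton_iff.mp hq') with ⟨rfl, rfl⟩ | ⟨rfl, rfl⟩ <;> tauto

/-- An independent set of `Q` contains at most one of the linked vertices `p₁, q₁`, so deleting
`p₂` or `q₂` makes it independent in `P`. -/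
theorem exists_indep_ncard_add_one_ge {P Q : SimpleGraph V} {p₁ p₂ q₁ q₂ : V}
    (hPQ : P.edgeSet ⊆ Q.edgeSet ∪ {s(p₁, p₂), s(q₁, q₂)}) (hlink : Q.Adj p₁ q₁) {S : Set V}
    (hS : ∀ v ∈ S, ∀ w ∈ S, ¬ Q.Adj v w) :
    ∃ T : Set V, (∀ v ∈ T, ∀ w ∈ T, ¬ P.Adj v w) ∧ S.ncard ≤ T.ncard + 1 := by
  have hsub {x : V} : ∀ v ∈ S \ {x}, ∀ w ∈ S \ {x}, ¬ Q.Adj v w :=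
    fun v hv w hw ↦ hS v hv.1 w hw.1
  by_cases hp₁ : p₁ ∈ S
  · have hq₁ : q₁ ∉ S := fun hq₁ ↦ hS p₁ hp₁ q₁ hq₁ hlink
    refine ⟨S \ {p₂}, indep_of_edgeSet_subset_union_pair hPQ hsub ?_ ?_, ?_⟩
    · exact Or.inr fun h ↦ h.2 rfl
    · exact Or.inl fun h ↦ hq₁ h.1
    · have := Set.pred_ncard_le_ncard_sdiff_singleton S p₂; omega
  · refine ⟨S \ {q₂}, indep_of_edgeSet_subset_union_pair hPQ hsub ?_ ?_, ?_⟩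
    · exact Or.inl fun h ↦ hp₁ h.1
    · exact Or.inr fun h ↦ h.2 rfl
    · have := Set.pred_ncard_le_ncard_sdiff_singleton S q₂; omega

theorem ncard_le_indepNum' [Finite V] {G : SimpleGraph V} {S : Set V}
    (hS : ∀ v ∈ S, ∀ w ∈ S, ¬ G.Adj v w) : S.ncard ≤ indepNum' G :=
  le_csSup ⟨Nat.card V, by rintro n ⟨T, -, rfl⟩; exact Set.ncard_le_card T⟩ ⟨S, hS, rfl⟩

theorem indepNum'_le_of_edgeSet_subset_union_pair [Finite V] {P Q : SimpleGraph V}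
    {p₁ p₂ q₁ q₂ : V} (hPQ : P.edgeSet ⊆ Q.edgeSet ∪ {s(p₁, p₂), s(q₁, q₂)})
    (hlink : Q.Adj p₁ q₁) : indepNum' Q ≤ indepNum' P + 1 := by
  refine csSup_le ⟨0, ∅, by simp, by simp⟩ ?_
  rintro n ⟨S, hS, rfl⟩
  obtain ⟨T, hT, hST⟩ := exists_indep_ncard_add_one_ge hPQ hlink hS
  have := ncard_le_indepNum' hT
  omega

theorem edgeSet_twoSwitch (G : SimpleGraph V) (a b c d : V) :
    (twoSwitch G a b c d).edgeSet =
      ((G.edgeSet \ {s(a, b), s(c, d)}) ∪ {s(a, c), s(b, d)}) \ Sym2.diagSet :=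
  edgeSet_fromEdgeSet _

theorem edgeSet_subset_twoSwitch_union (G : SimpleGraph V) (a b c d : V) :
    G.edgeSet ⊆ (twoSwitch G a b c d).edgeSet ∪ {s(a, b), s(c, d)} := by
  intro e he
  by_cases hab : e ∈ ({s(a, b), s(c, d)} : Set (Sym2 V))
  · exact Or.inr hab
  · rw [edgeSet_twoSwitch]
    exact Or.inl ⟨Or.inl ⟨he, hab⟩, G.not_isDiag_of_mem_edgeSet he⟩

theorem twoSwitch_edgeSet_subset_union (G : SimpleGraph V) (a b c d : V) :
    (twoSwitch G a b c d).edgeSet ⊆ G.edgeSet ∪ {s(a, c), s(b, d)} := by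
  rw [edgeSet_twoSwitch]
  rintro e ⟨he | he, -⟩
  · exact Or.inl he.1
  · exact Or.inr he

theorem twoSwitch_adj_of_ne (G : SimpleGraph V) (b d : V) {a c : V} (hac : a ≠ c) :
    (twoSwitch G a b c d).Adj a c :=
  (fromEdgeSet_adj _).mpr ⟨Or.inr (Or.inl rfl), hac⟩

end SimpleGraph

/-- the independence number is stable under 2-switch. -/
theorem stmt_14 {V : Type*} [Fintype V] (G G' : SimpleGraph V)
    (h : ObtainedByTwoSwitch G G') :
    |(indepNum' G' : ℤ) - (indepNum' G : ℤ)| ≤ 1 := by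
  obtain ⟨a, b, c, d, ⟨-, hac, -, -, -, -, hab, -⟩, rfl⟩ := h
  have hG := indepNum'_le_of_edgeSet_subset_union_pair
    (G.twoSwitch_edgeSet_subset_union a b c d) hab
  have hG' := indepNum'_le_of_edgeSet_subset_union_pair
    (G.edgeSet_subset_twoSwitch_union a b c d) (G.twoSwitch_adj_of_ne b d hac)
  rw [abs_le]
  omega
end

section
/- The number of connected components is stable under 2-switch: for every simple graph G on a finite vertex set V and every graph G' obtained from G by a 2-switch, |κ(G') − κ(G)| ≤ 1, where κ denotes the number of connected components. -/
open SimpleGraph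

private lemma key_lemma {V : Type*} [Finite V] (H K : SimpleGraph V) (p q : V)
    (hle : H ≤ K)
    (hadj : ∀ u v, K.Adj u v → H.Reachable u v ∨
      (H.Reachable u p ∧ H.Reachable q v) ∨ (H.Reachable u q ∧ H.Reachable p v)) :
    Nat.card H.ConnectedComponent ≤ Nat.card K.ConnectedComponent + 1 ∧
      Nat.card K.ConnectedComponent ≤ Nat.card H.ConnectedComponent := by
  classical
  haveI hfK : Finite K.ConnectedComponent := Finite.of_surjective K.connectedComponentMk (ConnectedComponent.ind fun v => ⟨v, rfl⟩)
  haveI := Fintype.ofFinite K.ConnectedComponent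
  haveI hfH : Finite H.ConnectedComponent := Finite.of_surjective H.connectedComponentMk (ConnectedComponent.ind fun v => ⟨v, rfl⟩)
  set R : V → V → Prop := fun u v => H.Reachable u v ∨
      (H.Reachable u p ∧ H.Reachable q v) ∨ (H.Reachable u q ∧ H.Reachable p v) with hR
  have hRrefl : ∀ u, R u u := fun u => Or.inl (Reachable.refl u)
  have hRtrans : ∀ {u v w}, R u v → R v w → R u w := by
    rintro u v w (h1 | ⟨h1, h2⟩ | ⟨h1, h2⟩) (g1 | ⟨g1, g2⟩ | ⟨g1, g2⟩)
    · exact Or.inl (h1.trans g1)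
    · exact Or.inr (Or.inl ⟨h1.trans g1, g2⟩)
    · exact Or.inr (Or.inr ⟨h1.trans g1, g2⟩)
    · exact Or.inr (Or.inl ⟨h1, h2.trans g1⟩)
    · exact Or.inl (h1.trans ((h2.trans g1).symm.trans g2))
    · exact Or.inl (h1.trans g2)
    · exact Or.inr (Or.inr ⟨h1, h2.trans g1⟩)
    · exact Or.inl (h1.trans g2)
    · exact Or.inl (h1.trans ((h2.trans g1).symm.trans g2))
  have hreach : ∀ u v, K.Reachable u v → R u v := by
    intro u v huv
    rw [reachable_iff_reflTransGen] at huv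
    induction huv with
    | refl => exact hRrefl u
    | tail _ hadj' ih => exact hRtrans ih (hadj _ _ hadj')
  let φ : H.ConnectedComponent → K.ConnectedComponent :=
    ConnectedComponent.map (Hom.ofLE hle)
  have hsurj : Function.Surjective φ :=
    ConnectedComponent.ind fun v => ⟨H.connectedComponentMk v, rfl⟩
  constructor
  · have hinj : Function.Injective (fun x : H.ConnectedComponent =>
        if x = H.connectedComponentMk p then (none : Option K.ConnectedComponent)
        else some (φ x)) := by
      intro x y hxy
      by_cases hx : x = H.connectedComponentMk p <;>
        by_cases hy : y = H.connectedComponentMk p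
      · exact hx.trans hy.symm
      · simp only [if_pos hx, if_neg hy] at hxy; exact absurd hxy.symm (Option.some_ne_none _)
      · simp only [if_neg hx, if_pos hy] at hxy; exact absurd hxy (Option.some_ne_none _)
      · simp only [if_neg hx, if_neg hy, Option.some.injEq] at hxy
        revert hx hy hxy
        refine ConnectedComponent.ind₂ (fun u v hx hy hxy => ?_) x y
        have hKr : K.Reachable u v := by
          have : K.connectedComponentMk u = K.connectedComponentMk v := hxy
          exact (ConnectedComponent.eq).mp this
        rcases hreach u v hKr with h1 | ⟨h1, h2⟩ | ⟨h1, h2⟩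
        · exact ConnectedComponent.sound h1
        · exact absurd (ConnectedComponent.sound h1) hx
        · exact absurd (ConnectedComponent.sound h2.symm) hy
    calc Nat.card H.ConnectedComponent ≤ Nat.card (Option K.ConnectedComponent) :=
          Nat.card_le_card_of_injective _ hinj
      _ = Nat.card K.ConnectedComponent + 1 := Finite.card_option
  · exact Nat.card_le_card_of_surjective φ hsurj

/-- the number of connected components is stable under 2-switch. -/
theorem stmt_16 {V : Type*} [Fintype V] (G G' : SimpleGraph V)
    (h : ObtainedByTwoSwitch G G') :
    |(Nat.card G'.ConnectedComponent : ℤ) - (Nat.card G.ConnectedComponent : ℤ)| ≤ 1 := by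
  obtain ⟨a, b, c, d, ⟨hab, hac, had, hbc, hbd, hcd, hGab, hGcd, hnac, hnbd⟩, rfl⟩ := h
  set G' := twoSwitch G a b c d with hG'
  have hG'adj : ∀ u v, G'.Adj u v ↔
      ((G.Adj u v ∧ s(u, v) ≠ s(a, b) ∧ s(u, v) ≠ s(c, d)) ∨
        s(u, v) = s(a, c) ∨ s(u, v) = s(b, d)) := by
    intro u v
    rw [hG', twoSwitch, fromEdgeSet_adj]
    constructor
    · rintro ⟨hmem, _⟩
      rcases hmem with ⟨he, hne⟩ | he
      · rw [Set.mem_insert_iff, Set.mem_singleton_iff] at hne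
        push_neg at hne
        exact Or.inl ⟨(mem_edgeSet G).mp he, hne⟩
      · rw [Set.mem_insert_iff, Set.mem_singleton_iff] at he
        exact Or.inr he
    · rintro (⟨hA, h1, h2⟩ | h1 | h1)
      · exact ⟨Or.inl ⟨hA, by
          rw [Set.mem_insert_iff, Set.mem_singleton_iff]; push_neg; exact ⟨h1, h2⟩⟩, hA.ne⟩
      · refine ⟨Or.inr (by rw [Set.mem_insert_iff]; exact Or.inl h1), ?_⟩
        rw [Sym2.eq_iff] at h1
        rcases h1 with ⟨rfl, rfl⟩ | ⟨rfl, rfl⟩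
        · exact hac
        · exact hac.symm
      · refine ⟨Or.inr (by rw [Set.mem_insert_iff, Set.mem_singleton_iff]; exact Or.inr h1), ?_⟩
        rw [Sym2.eq_iff] at h1
        rcases h1 with ⟨rfl, rfl⟩ | ⟨rfl, rfl⟩
        · exact hbd
        · exact hbd.symm
  have hG'ac : G'.Adj a c := (hG'adj a c).mpr (Or.inr (Or.inl rfl))
  have hG'bd : G'.Adj b d := (hG'adj b d).mpr (Or.inr (Or.inr rfl))
  set K := G ⊔ G' with hK
  have hleG : G ≤ K := le_sup_left
  have hleG' : G' ≤ K := le_sup_right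
  have hadj1 : ∀ u v, K.Adj u v → G.Reachable u v ∨
      (G.Reachable u a ∧ G.Reachable c v) ∨ (G.Reachable u c ∧ G.Reachable a v) := by
    intro u v huv
    rcases (sup_adj _ _ _ _).mp huv with hA | hA
    · exact Or.inl hA.reachable
    · rcases (hG'adj u v).mp hA with ⟨hA', _⟩ | h1 | h1
      · exact Or.inl hA'.reachable
      · rw [Sym2.eq_iff] at h1
        rcases h1 with ⟨rfl, rfl⟩ | ⟨rfl, rfl⟩
        · exact Or.inr (Or.inl ⟨Reachable.refl _, Reachable.refl _⟩)
        · exact Or.inr (Or.inr ⟨Reachable.refl _, Reachable.refl _⟩)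
      · rw [Sym2.eq_iff] at h1
        rcases h1 with ⟨rfl, rfl⟩ | ⟨rfl, rfl⟩
        · exact Or.inr (Or.inl ⟨hGab.symm.reachable, hGcd.reachable⟩)
        · exact Or.inr (Or.inr ⟨hGcd.symm.reachable, hGab.reachable⟩)
  have hadj2 : ∀ u v, K.Adj u v → G'.Reachable u v ∨
      (G'.Reachable u a ∧ G'.Reachable b v) ∨ (G'.Reachable u b ∧ G'.Reachable a v) := by
    intro u v huv
    rcases (sup_adj _ _ _ _).mp huv with hA | hA
    · by_cases h1 : s(u, v) = s(a, b)
      · rw [Sym2.eq_iff] at h1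
        rcases h1 with ⟨rfl, rfl⟩ | ⟨rfl, rfl⟩
        · exact Or.inr (Or.inl ⟨Reachable.refl _, Reachable.refl _⟩)
        · exact Or.inr (Or.inr ⟨Reachable.refl _, Reachable.refl _⟩)
      · by_cases h2 : s(u, v) = s(c, d)
        · rw [Sym2.eq_iff] at h2
          rcases h2 with ⟨rfl, rfl⟩ | ⟨rfl, rfl⟩
          · exact Or.inr (Or.inl ⟨hG'ac.symm.reachable, hG'bd.reachable⟩)
          · exact Or.inr (Or.inr ⟨hG'bd.symm.reachable, hG'ac.reachable⟩)
        · exact Or.inl ((hG'adj u v).mpr (Or.inl ⟨hA, h1, h2⟩)).reachable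
    · exact Or.inl hA.reachable
  obtain ⟨h1, h2⟩ := key_lemma G K a c hleG hadj1
  obtain ⟨h3, h4⟩ := key_lemma G' K a b hleG' hadj2
  rw [abs_le]
  omega
end

section
/- The clique number is stable under 2-switch: for every simple graph G on a finite vertex set V and every graph G' obtained from G by a 2-switch, |ω(G') − ω(G)| ≤ 1. -/
open SimpleGraph

/-- The clique number `ω(G)`: the maximum cardinality of a set of pairwise adjacent
vertices of `G`. -/
noncomputable def cliqueNum' {V : Type*} (G : SimpleGraph V) : ℕ :=
  sSup {n : ℕ | ∃ S : Set V, (∀ v ∈ S, ∀ w ∈ S, v ≠ w → G.Adj v w) ∧ S.ncard = n}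

lemma twoSwitch_adj_s19 {V : Type*} {G : SimpleGraph V} {a b c d : V}
    (h : Switchable G a b c d) (x y : V) :
    (twoSwitch G a b c d).Adj x y ↔
      ((G.Adj x y ∧ s(x,y) ≠ s(a,b) ∧ s(x,y) ≠ s(c,d)) ∨ s(x,y) = s(a,c) ∨ s(x,y) = s(b,d)) := by
  obtain ⟨hab, hac, had, hbc, hbd, hcd, hAab, hAcd, hNac, hNbd⟩ := h
  rw [twoSwitch, fromEdgeSet_adj]
  constructor
  · rintro ⟨hm, hne⟩
    simp only [Set.mem_union, Set.mem_diff, SimpleGraph.mem_edgeSet, Set.mem_insert_iff,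
      Set.mem_singleton_iff] at hm
    tauto
  · intro hx
    rcases hx with ⟨hA, h1, h2⟩ | h1 | h1
    · exact ⟨Or.inl ⟨hA, by simp [h1, h2]⟩, hA.ne⟩
    · refine ⟨Or.inr (by simp [h1]), ?_⟩
      rw [Sym2.eq_iff] at h1
      rintro rfl; rcases h1 with ⟨rfl, rfl⟩ | ⟨rfl, rfl⟩ <;> exact hac rfl
    · refine ⟨Or.inr (by simp [h1]), ?_⟩
      rw [Sym2.eq_iff] at h1
      rintro rfl; rcases h1 with ⟨rfl, rfl⟩ | ⟨rfl, rfl⟩ <;> exact hbd rfl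

lemma step_le {V : Type*} [Fintype V] {G H : SimpleGraph V}
    (hcl : ∀ S : Set V, (∀ v ∈ S, ∀ w ∈ S, v ≠ w → G.Adj v w) →
      ∃ T : Set V, (∀ v ∈ T, ∀ w ∈ T, v ≠ w → H.Adj v w) ∧ S.ncard ≤ T.ncard + 1) :
    cliqueNum' G ≤ cliqueNum' H + 1 := by
  have hbdd : BddAbove {n : ℕ | ∃ S : Set V, (∀ v ∈ S, ∀ w ∈ S, v ≠ w → H.Adj v w) ∧ S.ncard = n} := by
    refine ⟨Fintype.card V, ?_⟩
    rintro n ⟨S, _, rfl⟩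
    calc S.ncard ≤ (Set.univ : Set V).ncard := Set.ncard_le_ncard (Set.subset_univ S) Set.finite_univ
    _ = Fintype.card V := by rw [Set.ncard_univ, Nat.card_eq_fintype_card]
  unfold cliqueNum'
  refine csSup_le ⟨0, ⟨∅, by simp, by simp⟩⟩ ?_
  rintro n ⟨S, hS, rfl⟩
  obtain ⟨T, hT, hle⟩ := hcl S hS
  have := le_csSup hbdd (⟨T, hT, rfl⟩ :
    T.ncard ∈ {n : ℕ | ∃ S : Set V, (∀ v ∈ S, ∀ w ∈ S, v ≠ w → H.Adj v w) ∧ S.ncard = n})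
  omega

/-- the clique number is stable under 2-switch. -/
theorem stmt_19 {V : Type*} [Fintype V] (G G' : SimpleGraph V)
    (h : ObtainedByTwoSwitch G G') :
    |(cliqueNum' G' : ℤ) - (cliqueNum' G : ℤ)| ≤ 1 := by
  obtain ⟨a, b, c, d, hsw, rfl⟩ := h
  have hadj := twoSwitch_adj_s19 hsw
  obtain ⟨hab, hac, had, hbc, hbd, hcd, hAab, hAcd, hNac, hNbd⟩ := hsw
  have hnab : ¬ (twoSwitch G a b c d).Adj a b := by
    rw [hadj]
    simp [Sym2.eq_iff, hab, hac, had, hbc, hbd, hcd,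
      hab.symm, hac.symm, had.symm, hbc.symm, hbd.symm, hcd.symm]
  have h1 : cliqueNum' G ≤ cliqueNum' (twoSwitch G a b c d) + 1 := by
    apply step_le
    intro S hS
    by_cases hA : a ∈ S ∧ b ∈ S
    · refine ⟨S \ {b}, ?_, ?_⟩
      · intro v hv w hw hvw
        rw [hadj]
        refine Or.inl ⟨hS v hv.1 w hw.1 hvw, ?_, ?_⟩
        · intro he
          rcases Sym2.eq_iff.mp he with ⟨h1, h2⟩ | ⟨h1, h2⟩
          · exact hw.2 h2
          · exact hv.2 h1
        · intro he
          rcases Sym2.eq_iff.mp he with ⟨h1, h2⟩ | ⟨h1, h2⟩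
          · exact hNac (hS a hA.1 c (h1 ▸ hv.1) hac)
          · exact hNac (hS a hA.1 c (h2 ▸ hw.1) hac)
      · have := Set.ncard_diff_singleton_add_one hA.2 (Set.toFinite S)
        omega
    · by_cases hC : c ∈ S ∧ d ∈ S
      · refine ⟨S \ {d}, ?_, ?_⟩
        · intro v hv w hw hvw
          rw [hadj]
          refine Or.inl ⟨hS v hv.1 w hw.1 hvw, ?_, ?_⟩
          · intro he
            rcases Sym2.eq_iff.mp he with ⟨h1, h2⟩ | ⟨h1, h2⟩
            · exact hA ⟨h1 ▸ hv.1, h2 ▸ hw.1⟩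
            · exact hA ⟨h2 ▸ hw.1, h1 ▸ hv.1⟩
          · intro he
            rcases Sym2.eq_iff.mp he with ⟨h1, h2⟩ | ⟨h1, h2⟩
            · exact hw.2 h2
            · exact hv.2 h1
        · have := Set.ncard_diff_singleton_add_one hC.2 (Set.toFinite S)
          omega
      · refine ⟨S, ?_, Nat.le_succ _⟩
        intro v hv w hw hvw
        rw [hadj]
        refine Or.inl ⟨hS v hv w hw hvw, ?_, ?_⟩
        · intro he
          rcases Sym2.eq_iff.mp he with ⟨h1, h2⟩ | ⟨h1, h2⟩
          · exact hA ⟨h1 ▸ hv, h2 ▸ hw⟩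
          · exact hA ⟨h2 ▸ hw, h1 ▸ hv⟩
        · intro he
          rcases Sym2.eq_iff.mp he with ⟨h1, h2⟩ | ⟨h1, h2⟩
          · exact hC ⟨h1 ▸ hv, h2 ▸ hw⟩
          · exact hC ⟨h2 ▸ hw, h1 ▸ hv⟩
  have h2 : cliqueNum' (twoSwitch G a b c d) ≤ cliqueNum' G + 1 := by
    apply step_le
    intro S hS
    by_cases hA : a ∈ S ∧ c ∈ S
    · refine ⟨S \ {c}, ?_, ?_⟩
      · intro v hv w hw hvw
        rcases (hadj v w).mp (hS v hv.1 w hw.1 hvw) with ⟨hGA, _, _⟩ | he | he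
        · exact hGA
        · exfalso
          rcases Sym2.eq_iff.mp he with ⟨h1, h2⟩ | ⟨h1, h2⟩
          · exact hw.2 h2
          · exact hv.2 h1
        · exfalso
          have hbS : b ∈ S := by
            rcases Sym2.eq_iff.mp he with ⟨h1, _⟩ | ⟨_, h2⟩
            · exact h1 ▸ hv.1
            · exact h2 ▸ hw.1
          exact hnab (hS a hA.1 b hbS hab)
      · have := Set.ncard_diff_singleton_add_one hA.2 (Set.toFinite S)
        omega
    · by_cases hB : b ∈ S ∧ d ∈ S
      · refine ⟨S \ {d}, ?_, ?_⟩
        · intro v hv w hw hvw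
          rcases (hadj v w).mp (hS v hv.1 w hw.1 hvw) with ⟨hGA, _, _⟩ | he | he
          · exact hGA
          · exfalso
            rcases Sym2.eq_iff.mp he with ⟨h1, h2⟩ | ⟨h1, h2⟩
            · exact hA ⟨h1 ▸ hv.1, h2 ▸ hw.1⟩
            · exact hA ⟨h2 ▸ hw.1, h1 ▸ hv.1⟩
          · exfalso
            rcases Sym2.eq_iff.mp he with ⟨h1, h2⟩ | ⟨h1, h2⟩
            · exact hw.2 h2
            · exact hv.2 h1
        · have := Set.ncard_diff_singleton_add_one hB.2 (Set.toFinite S)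
          omega
      · refine ⟨S, ?_, Nat.le_succ _⟩
        intro v hv w hw hvw
        rcases (hadj v w).mp (hS v hv w hw hvw) with ⟨hGA, _, _⟩ | he | he
        · exact hGA
        · exfalso
          rcases Sym2.eq_iff.mp he with ⟨h1, h2⟩ | ⟨h1, h2⟩
          · exact hA ⟨h1 ▸ hv, h2 ▸ hw⟩
          · exact hA ⟨h2 ▸ hw, h1 ▸ hv⟩
        · exfalso
          rcases Sym2.eq_iff.mp he with ⟨h1, h2⟩ | ⟨h1, h2⟩
          · exact hB ⟨h1 ▸ hv, h2 ▸ hw⟩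
          · exact hB ⟨h2 ▸ hw, h1 ▸ hv⟩
  rw [abs_le]
  omega
end
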